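/- arXiv:1907.00257 — 5 statements merged into one kernel-verified Lean document; each statement's English description precedes it below -/
import Mathlib

section
/- Every isomorphism in the category of Markov kernels between Polish measurable spaces is deterministic: if M : X → Y and N : Y → X are Markov kernels with M·N = id_X and N·M = id_Y (as kernels, where identity kernels are x ↦ δ_x), then for every x ∈ X there exists y ∈ Y with M(x) = δ_y. -/
/-!
From `N ∘ₖ M = id` we get `∫ N y {x} ∂(M x) = 1`, and since the integrand is at most `1`,
`N y = δ_x` for `M x`-almost every `y`. Fix one such `y`; then
`M x = (M ∘ₖ N) y = δ_y` because `M ∘ₖ N = id`.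
-/

open ProbabilityTheory MeasureTheory

lemma MeasureTheory.Measure.eq_dirac_of_apply_singleton_eq_one {α : Type*} [MeasurableSpace α]
    [MeasurableSingletonClass α] {μ : Measure α} [IsProbabilityMeasure μ] {a : α}
    (h : μ {a} = 1) : μ = dirac a := by
  have hae : ∀ᵐ x ∂μ, x ∈ ({a} : Set α) :=
    (prob_compl_eq_zero_iff (measurableSet_singleton a)).2 h
  rw [← restrict_eq_self_of_ae_mem hae, restrict_singleton, h, one_smul]

namespace ProbabilityTheory.Kernel

variable {α β γ : Type*} [MeasurableSpace α] [MeasurableSpace β] [MeasurableSpace γ]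

lemma ae_apply_eq_one_of_comp_apply_eq_one {κ : Kernel α β} {η : Kernel β γ}
    [IsMarkovKernel κ] [IsMarkovKernel η] {a : α} {s : Set γ} (hs : MeasurableSet s)
    (h : (η ∘ₖ κ) a s = 1) : ∀ᵐ b ∂κ a, η b s = 1 := by
  rw [comp_apply' η κ a hs] at h
  refine ae_eq_of_ae_le_of_lintegral_le (ae_of_all _ fun b => prob_le_one) (by simp [h])
    aemeasurable_const ?_
  simp [h]

lemma ae_apply_eq_dirac_of_comp_eq_id [MeasurableSingletonClass α] {κ : Kernel α β}
    {η : Kernel β α} [IsMarkovKernel κ] [IsMarkovKernel η] (h : η ∘ₖ κ = Kernel.id) (a : α) :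
    ∀ᵐ b ∂κ a, η b = Measure.dirac a := by
  have hsingleton : (η ∘ₖ κ) a {a} = 1 := by simp [h, id_apply]
  filter_upwards [ae_apply_eq_one_of_comp_apply_eq_one (measurableSet_singleton a) hsingleton]
    with b hb
  exact Measure.eq_dirac_of_apply_singleton_eq_one hb

lemma exists_apply_eq_dirac_of_comp_eq_id [MeasurableSingletonClass α] {κ : Kernel α β}
    {η : Kernel β α} [IsMarkovKernel κ] [IsMarkovKernel η] (hηκ : η ∘ₖ κ = Kernel.id)
    (hκη : κ ∘ₖ η = Kernel.id) (a : α) : ∃ b, κ a = Measure.dirac b := by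
  obtain ⟨b, hb⟩ := (ae_apply_eq_dirac_of_comp_eq_id hηκ a).exists
  refine ⟨b, ?_⟩
  calc κ a = (κ ∘ₖ η) b := by rw [comp_apply, hb, Measure.dirac_bind κ.measurable]
    _ = Measure.dirac b := by rw [hκη, id_apply]

end ProbabilityTheory.Kernel

theorem markov_iso_deterministic_general
    {X Y : Type*} [MeasurableSpace X] [MeasurableSpace Y]
    [StandardBorelSpace X]
    (M : Kernel X Y) (N : Kernel Y X) [IsMarkovKernel M] [IsMarkovKernel N]
    (hMN : N ∘ₖ M = Kernel.id) (hNM : M ∘ₖ N = Kernel.id) :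
    ∀ x : X, ∃ y : Y, M x = Measure.dirac y :=
  Kernel.exists_apply_eq_dirac_of_comp_eq_id hMN hNM

/-- All isomorphisms in the category of Markov kernels between Polish (standard Borel)
measurable spaces are deterministic: if `M : X → Y` and `N : Y → X` are mutually inverse
Markov kernels, then every `M x` is a Dirac measure. -/
theorem markov_iso_deterministic
    {X Y : Type*} [MeasurableSpace X] [MeasurableSpace Y]
    [StandardBorelSpace X] [StandardBorelSpace Y]
    (M : Kernel X Y) (N : Kernel Y X) [IsMarkovKernel M] [IsMarkovKernel N]
    (hMN : N ∘ₖ M = Kernel.id) (hNM : M ∘ₖ N = Kernel.id) :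
    ∀ x : X, ∃ y : Y, M x = Measure.dirac y :=
  markov_iso_deterministic_general M N hMN hNM
end

section
/- Let f : X → Y be a measurable map of metric measure spaces and 1 ≤ p < ∞. Precomposition by f is nonexpansive for the L^p metric on all function spaces out of Y (i.e., d_{L^p}(f·g, f·g') ≤ d_{L^p}(g,g') for all measurable g,g' : Y → Z into any metric space Z) if and only if f is measure-decreasing, i.e., the pushforward measure satisfies μ_X f⁻¹ ≤ μ_Y. -/
open MeasureTheory ENNReal

/-- A measurable map `f : X → Y` of metric measure spaces is nonexpansive under
precomposition for the `L^p` metric on all function spaces out of `Y` if and only if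
it is measure-decreasing: `μ_X ∘ f⁻¹ ≤ μ_Y`. -/
theorem Lp_precomp_nonexpansive_iff_measure_decreasing
    {X Y : Type} [MeasurableSpace X] [MeasurableSpace Y]
    (μX : Measure X) (μY : Measure Y) [SigmaFinite μX] [SigmaFinite μY]
    (f : X → Y) (hf : Measurable f) (p : ℝ) (hp : 1 ≤ p) :
    (∀ (Z : Type) (dZ : Z → Z → ℝ≥0∞) (g g' : Y → Z),
        Measurable (fun y => dZ (g y) (g' y)) →
        (∫⁻ x, dZ (g (f x)) (g' (f x)) ^ p ∂μX) ^ (1 / p) ≤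
          (∫⁻ y, dZ (g y) (g' y) ^ p ∂μY) ^ (1 / p)) ↔
      μX.map f ≤ μY := by
  have hp0 : (0 : ℝ) < p := lt_of_lt_of_le one_pos hp
  constructor
  · intro H
    rw [Measure.le_iff]
    intro s hs
    have key := H ℝ≥0∞ (fun a _ => a) (s.indicator 1) (fun _ => 0)
      (measurable_one.indicator hs)
    have hind : ∀ y : Y, (s.indicator (1 : Y → ℝ≥0∞) y) ^ p = s.indicator 1 y := by
      intro y
      by_cases hy : y ∈ s
      · simp [Set.indicator_of_mem hy]
      · simp [Set.indicator_of_notMem hy, ENNReal.zero_rpow_of_pos hp0]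
    simp only [hind] at key
    have h1 : (∫⁻ x, s.indicator (1 : Y → ℝ≥0∞) (f x) ∂μX) = μX (f ⁻¹' s) := by
      have : ∀ x : X, s.indicator (1 : Y → ℝ≥0∞) (f x)
          = (f ⁻¹' s).indicator (1 : X → ℝ≥0∞) x := by
        intro x
        by_cases hx : f x ∈ s
        · simp [Set.indicator_of_mem hx, Set.indicator_of_mem (Set.mem_preimage.mpr hx)]
        · simp [Set.indicator_of_notMem hx,
            Set.indicator_of_notMem (fun h => hx (Set.mem_preimage.mp h))]
      simp only [this]
      exact lintegral_indicator_one (hf hs)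
    have h2 : (∫⁻ y, s.indicator (1 : Y → ℝ≥0∞) y ∂μY) = μY s :=
      lintegral_indicator_one hs
    rw [h1, h2] at key
    rw [Measure.map_apply hf hs]
    have := ENNReal.rpow_le_rpow key (le_of_lt hp0)
    rwa [← ENNReal.rpow_mul, ← ENNReal.rpow_mul, one_div_mul_cancel hp0.ne',
      ENNReal.rpow_one, ENNReal.rpow_one] at this
  · intro hle Z dZ g g' hmeas
    apply ENNReal.rpow_le_rpow _ (by positivity)
    have : (∫⁻ x, dZ (g (f x)) (g' (f x)) ^ p ∂μX)
        = ∫⁻ y, dZ (g y) (g' y) ^ p ∂(μX.map f) := by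
      rw [lintegral_map (hmeas.pow_const p) hf]
    rw [this]
    exact lintegral_mono' hle le_rfl
end

section
/- Gluing lemma for Markov kernels: let W be a measurable space and X, Y, Z Polish spaces. Given Markov kernels M_X : W → X, M_Y : W → Y, M_Z : W → Z and couplings Π_{XY} : W → X × Y of (M_X, M_Y) and Π_{YZ} : W → Y × Z of (M_Y, M_Z), there exists a Markov kernel Π : W → X × Y × Z whose marginal on X × Y is Π_{XY} and whose marginal on Y × Z is Π_{YZ}. -/
open ProbabilityTheory MeasureTheory

private lemma kernel_map_map {α β γ δ : Type*} [MeasurableSpace α] [MeasurableSpace β]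
    [MeasurableSpace γ] [MeasurableSpace δ] (κ : Kernel α β) {f : β → γ} {g : γ → δ}
    (hf : Measurable f) (hg : Measurable g) :
    (κ.map f).map g = κ.map (g ∘ f) := by
  ext a s hs
  rw [Kernel.map_apply _ hg, Kernel.map_apply _ hf, Kernel.map_apply _ (hg.comp hf),
    Measure.map_map hg hf]

private lemma compProd_prod_fst {α β γ δ : Type*} [MeasurableSpace α] [MeasurableSpace β]
    [MeasurableSpace γ] [MeasurableSpace δ] (κ : Kernel α β) [IsMarkovKernel κ]
    (η : Kernel (α × β) γ) [IsMarkovKernel η] (ξ : Kernel (α × β) δ) [IsMarkovKernel ξ] :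
    (κ ⊗ₖ (η ×ₖ ξ)).map (fun p : β × γ × δ => (p.1, p.2.1)) = κ ⊗ₖ η := by
  ext a s hs
  rw [Kernel.map_apply' _ (by fun_prop) _ hs,
    Kernel.compProd_apply (hs.preimage (by fun_prop)),
    Kernel.compProd_apply hs]
  refine lintegral_congr fun b => ?_
  have h := Kernel.fst_prod η ξ
  have := Kernel.fst_apply' (η ×ₖ ξ) (a, b) (s := {c : γ | (b, c) ∈ s})
    (measurable_prodMk_left hs)
  rw [h] at this
  exact this.symm

private lemma compProd_prod_snd {α β γ δ : Type*} [MeasurableSpace α] [MeasurableSpace β]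
    [MeasurableSpace γ] [MeasurableSpace δ] (κ : Kernel α β) [IsMarkovKernel κ]
    (η : Kernel (α × β) γ) [IsMarkovKernel η] (ξ : Kernel (α × β) δ) [IsMarkovKernel ξ] :
    (κ ⊗ₖ (η ×ₖ ξ)).map (fun p : β × γ × δ => (p.1, p.2.2)) = κ ⊗ₖ ξ := by
  ext a s hs
  rw [Kernel.map_apply' _ (by fun_prop) _ hs,
    Kernel.compProd_apply (hs.preimage (by fun_prop)),
    Kernel.compProd_apply hs]
  refine lintegral_congr fun b => ?_
  have h := Kernel.snd_prod η ξ
  have := Kernel.snd_apply' (η ×ₖ ξ) (a, b) (s := {c : δ | (b, c) ∈ s})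
    (measurable_prodMk_left hs)
  rw [h] at this
  exact this.symm

/-- Gluing lemma for Markov kernels: kernels into `X × Y` and `Y × Z` sharing a common
marginal along `Y` can be glued to a Markov kernel into `X × Y × Z`. -/
theorem gluing_lemma_markov_kernels
    {W X Y Z : Type*} [MeasurableSpace W]
    [MeasurableSpace X] [MeasurableSpace Y] [MeasurableSpace Z]
    [StandardBorelSpace X] [StandardBorelSpace Y] [StandardBorelSpace Z]
    (MX : Kernel W X) (MY : Kernel W Y) (MZ : Kernel W Z)
    [IsMarkovKernel MX] [IsMarkovKernel MY] [IsMarkovKernel MZ]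
    (PiXY : Kernel W (X × Y)) (PiYZ : Kernel W (Y × Z))
    [IsMarkovKernel PiXY] [IsMarkovKernel PiYZ]
    (hXY1 : PiXY.map Prod.fst = MX) (hXY2 : PiXY.map Prod.snd = MY)
    (hYZ1 : PiYZ.map Prod.fst = MY) (hYZ2 : PiYZ.map Prod.snd = MZ) :
    ∃ Pi : Kernel W (X × Y × Z), IsMarkovKernel Pi ∧
      Pi.map (fun q => (q.1, q.2.1)) = PiXY ∧
      Pi.map (fun q => q.2) = PiYZ := by
  rcases isEmpty_or_nonempty W with hW | hW
  · refine ⟨0, ⟨fun a => (IsEmpty.false a).elim⟩, ?_, ?_⟩ <;>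
      exact Kernel.ext fun a => (IsEmpty.false a).elim
  · -- nonempty case
    have w0 : W := hW.some
    haveI : Nonempty X := by
      have : IsProbabilityMeasure (PiXY w0) := inferInstance
      have h := this.ne_zero
      rcases isEmpty_or_nonempty X with hX | hX
      · exact absurd (by simp [Measure.eq_zero_of_isEmpty]) h
      · exact hX
    haveI : Nonempty Z := by
      have : IsProbabilityMeasure (PiYZ w0) := inferInstance
      have h := this.ne_zero
      rcases isEmpty_or_nonempty Z with hZ | hZ
      · exact absurd (by simp [Measure.eq_zero_of_isEmpty]) h
      · exact hZ
    set PiYX : Kernel W (Y × X) := PiXY.map Prod.swap with hPiYX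
    haveI : IsMarkovKernel PiYX := Kernel.IsMarkovKernel.map _ measurable_swap
    have hfstYX : PiYX.fst = MY := by
      rw [Kernel.fst_eq, hPiYX, kernel_map_map _ measurable_swap measurable_fst]
      have : (Prod.fst ∘ Prod.swap : X × Y → Y) = Prod.snd := rfl
      rw [this, hXY2]
    have hfstYZ : PiYZ.fst = MY := by rw [Kernel.fst_eq, hYZ1]
    set κX : Kernel (W × Y) X := PiYX.condKernel with hκX
    set κZ : Kernel (W × Y) Z := PiYZ.condKernel with hκZ
    have hdisX : MY ⊗ₖ κX = PiYX := by
      rw [← hfstYX, hκX]; exact PiYX.disintegrate _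
    have hdisZ : MY ⊗ₖ κZ = PiYZ := by
      rw [← hfstYZ, hκZ]; exact PiYZ.disintegrate _
    set base : Kernel W (Y × X × Z) := MY ⊗ₖ (κX ×ₖ κZ) with hbase
    refine ⟨base.map (fun p : Y × X × Z => (p.2.1, p.1, p.2.2)),
      Kernel.IsMarkovKernel.map _ (by fun_prop), ?_, ?_⟩
    · rw [kernel_map_map _ (by fun_prop) (by fun_prop)]
      have hcomp : ((fun q : X × Y × Z => (q.1, q.2.1)) ∘
          (fun p : Y × X × Z => (p.2.1, p.1, p.2.2)))
          = (Prod.swap ∘ fun p : Y × X × Z => (p.1, p.2.1)) := rfl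
      rw [hcomp, ← kernel_map_map _ (by fun_prop) measurable_swap,
        compProd_prod_fst, hdisX, hPiYX, kernel_map_map _ measurable_swap measurable_swap]
      have : (Prod.swap ∘ Prod.swap : X × Y → X × Y) = id := rfl
      rw [this, Kernel.map_id]
    · rw [kernel_map_map _ (by fun_prop) (by fun_prop)]
      have hcomp : ((fun q : X × Y × Z => q.2) ∘
          (fun p : Y × X × Z => (p.2.1, p.1, p.2.2)))
          = (fun p : Y × X × Z => (p.1, p.2.2)) := rfl
      rw [hcomp, compProd_prod_snd, hdisZ]
end

section
/- The Wasserstein distance of order p between Markov kernels, defined for kernels M, N : X → Y between metric measure spaces by W_p(M,N) := inf over couplings Π of M and N of (∫_{X×Y×Y} d_Y(y,y')^p Π(dy,dy'|x) μ_X(dx))^{1/p}, satisfies W_p(M,M) = 0 and the triangle inequality W_p(M_1,M_3) ≤ W_p(M_1,M_2) + W_p(M_2,M_3) for all kernels M_1, M_2, M_3 : X → Y and all 1 ≤ p < ∞. -/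
/-!
The diagonal coupling `y ↦ (y, y)` of `M` with itself has cost zero. For the triangle
inequality, glue a coupling of `(M₁, M₂)` and one of `(M₂, M₃)` along the common marginal `M₂`:
disintegrating both with respect to the middle coordinate and taking the two conditional kernels
independently gives a kernel into `Y × Y × Y` whose outer pair couples `M₁` and `M₃`. Its cost is
bounded by the triangle inequality of `dY` followed by Minkowski's inequality for the measure
`μX ⊗ₘ G` on `X × (Y × Y × Y)`, where `G` is the glued kernel.
-/

open ProbabilityTheory MeasureTheory ENNReal

/-- The set of couplings of two Markov kernels `M N : X → Y`: kernels into `Y × Y` whose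
marginals are `M` and `N`. -/
def kernelCouplings {X Y : Type*} [MeasurableSpace X] [MeasurableSpace Y]
    (M N : Kernel X Y) : Set (Kernel X (Y × Y)) :=
  {Pi | IsMarkovKernel Pi ∧ Pi.map Prod.fst = M ∧ Pi.map Prod.snd = N}

/-- The Wasserstein distance of order `p` between Markov kernels `M N : X → Y`, relative to
a base measure `μX` on `X` and a `[0,∞]`-valued metric `dY` on `Y`. -/
noncomputable def kernelWasserstein {X Y : Type*} [MeasurableSpace X] [MeasurableSpace Y]
    (μX : Measure X) (dY : Y → Y → ℝ≥0∞) (p : ℝ) (M N : Kernel X Y) : ℝ≥0∞ :=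
  ⨅ Pi ∈ kernelCouplings M N,
    (∫⁻ x, ∫⁻ q, dY q.1 q.2 ^ p ∂(Pi x) ∂μX) ^ (1 / p)

namespace ProbabilityTheory.Kernel

variable {α β γ δ : Type*} [MeasurableSpace α] [MeasurableSpace β] [MeasurableSpace γ]
  [MeasurableSpace δ]

lemma map_prodMap_compProd (κ : Kernel α β) [IsSFiniteKernel κ] (η : Kernel (α × β) γ)
    [IsSFiniteKernel η] {f : γ → δ} (hf : Measurable f) :
    (κ ⊗ₖ η).map (Prod.map id f) = κ ⊗ₖ η.map f := by
  ext a s hs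
  rw [map_apply' _ (measurable_id.prodMap hf) _ hs,
    compProd_apply (measurable_id.prodMap hf hs), compProd_apply hs]
  refine lintegral_congr fun b => ?_
  rw [map_apply' _ hf _ (measurable_prodMk_left hs)]
  rfl

section Glue

variable [MeasurableSpace.CountableOrCountablyGenerated α γ] [StandardBorelSpace β] [Nonempty β]
  [StandardBorelSpace δ] [Nonempty δ] (π : Kernel α (γ × β)) [IsFiniteKernel π]
  (κ : Kernel α (γ × δ)) [IsFiniteKernel κ]

noncomputable def glue : Kernel α (γ × β × δ) :=
  π.fst ⊗ₖ (π.condKernel ×ₖ κ.condKernel)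

instance [IsMarkovKernel π] : IsMarkovKernel (glue π κ) := by
  unfold glue; infer_instance

lemma map_prodMap_fst_glue : (glue π κ).map (Prod.map id Prod.fst) = π := by
  rw [glue, map_prodMap_compProd _ _ measurable_fst, ← fst_eq, fst_prod, disintegrate]

lemma map_prodMap_snd_glue (h : π.fst = κ.fst) : (glue π κ).map (Prod.map id Prod.snd) = κ := by
  rw [glue, map_prodMap_compProd _ _ measurable_snd, ← snd_eq, snd_prod, h, disintegrate]

end Glue

end ProbabilityTheory.Kernel

theorem ENNReal.lintegral_lintegral_Lp_add_le {α β : Type*} [MeasurableSpace α]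
    [MeasurableSpace β] (μ : Measure α) [SFinite μ] (κ : Kernel α β) [IsSFiniteKernel κ]
    {f g : β → ℝ≥0∞} (hf : Measurable f) (hg : Measurable g) {p : ℝ} (hp : 1 ≤ p) :
    (∫⁻ a, ∫⁻ b, (f b + g b) ^ p ∂κ a ∂μ) ^ (1 / p) ≤
      (∫⁻ a, ∫⁻ b, f b ^ p ∂κ a ∂μ) ^ (1 / p) + (∫⁻ a, ∫⁻ b, g b ^ p ∂κ a ∂μ) ^ (1 / p) := by
  rw [← Measure.lintegral_compProd (f := fun z => (f z.2 + g z.2) ^ p) (by fun_prop),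
    ← Measure.lintegral_compProd (f := fun z => f z.2 ^ p) (by fun_prop),
    ← Measure.lintegral_compProd (f := fun z => g z.2 ^ p) (by fun_prop)]
  exact ENNReal.lintegral_Lp_add_le (hf.comp measurable_snd).aemeasurable
    (hg.comp measurable_snd).aemeasurable hp

section Wasserstein

variable {X Y : Type*} [MeasurableSpace X] [MeasurableSpace Y]

noncomputable def couplingCost (μX : Measure X) (dY : Y → Y → ℝ≥0∞) (p : ℝ)
    (π : Kernel X (Y × Y)) : ℝ≥0∞ :=
  ∫⁻ x, ∫⁻ q, dY q.1 q.2 ^ p ∂(π x) ∂μX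

variable {μX : Measure X} {dY : Y → Y → ℝ≥0∞} {p : ℝ}

lemma kernelWasserstein_le_couplingCost {M N : Kernel X Y} {π : Kernel X (Y × Y)}
    (hπ : π ∈ kernelCouplings M N) :
    kernelWasserstein μX dY p M N ≤ couplingCost μX dY p π ^ (1 / p) :=
  iInf₂_le π hπ

lemma couplingCost_map {Z : Type*} [MeasurableSpace Z]
    (hd : Measurable fun q : Y × Y => dY q.1 q.2) (η : Kernel X Z) {f : Z → Y × Y}
    (hf : Measurable f) :
    couplingCost μX dY p (η.map f) = ∫⁻ x, ∫⁻ z, dY (f z).1 (f z).2 ^ p ∂(η x) ∂μX := by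
  simp_rw [couplingCost, Kernel.lintegral_map _ hf _ (hd.pow_const p)]

lemma map_diag_mem_kernelCouplings (M : Kernel X Y) [IsMarkovKernel M] :
    M.map (fun y => (y, y)) ∈ kernelCouplings M M := by
  have hdiag : Measurable fun y : Y => (y, y) := by fun_prop
  refine ⟨Kernel.IsMarkovKernel.map _ hdiag, ?_, ?_⟩ <;>
    rw [← Kernel.map_comp_right _ hdiag (by fun_prop)] <;> exact Kernel.map_id _

lemma couplingCost_map_diag (hd0 : ∀ y, dY y y = 0) (hd : Measurable fun q : Y × Y => dY q.1 q.2)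
    (hp : 0 < p) (M : Kernel X Y) : couplingCost μX dY p (M.map fun y => (y, y)) = 0 := by
  rw [couplingCost_map hd _ (f := fun y => (y, y)) (by fun_prop)]
  simp [hd0, zero_rpow_of_pos hp]

lemma map_snd_mem_kernelCouplings {M₁ M₂ M₃ : Kernel X Y} {G : Kernel X (Y × Y × Y)}
    [IsMarkovKernel G] (h₁₂ : G.map (fun r => (r.2.1, r.1)) ∈ kernelCouplings M₁ M₂)
    (h₂₃ : G.map (fun r => (r.1, r.2.2)) ∈ kernelCouplings M₂ M₃) :
    G.map Prod.snd ∈ kernelCouplings M₁ M₃ := by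
  refine ⟨Kernel.IsMarkovKernel.map _ measurable_snd, ?_, ?_⟩
  · rw [← h₁₂.2.1, ← Kernel.map_comp_right _ measurable_snd measurable_fst,
      ← Kernel.map_comp_right _ (by fun_prop) measurable_fst]
    rfl
  · rw [← h₂₃.2.2, ← Kernel.map_comp_right _ measurable_snd measurable_snd,
      ← Kernel.map_comp_right _ (by fun_prop) measurable_snd]
    rfl

lemma couplingCost_map_snd_rpow_le [SFinite μX]
    (hdtri : ∀ y y' y'', dY y y'' ≤ dY y y' + dY y' y'')
    (hd : Measurable fun q : Y × Y => dY q.1 q.2) (hp : 1 ≤ p) (G : Kernel X (Y × Y × Y))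
    [IsSFiniteKernel G] :
    couplingCost μX dY p (G.map Prod.snd) ^ (1 / p) ≤
      couplingCost μX dY p (G.map fun r => (r.2.1, r.1)) ^ (1 / p) +
        couplingCost μX dY p (G.map fun r => (r.1, r.2.2)) ^ (1 / p) := by
  rw [couplingCost_map hd _ measurable_snd, couplingCost_map hd _ (by fun_prop),
    couplingCost_map hd _ (by fun_prop)]
  calc (∫⁻ x, ∫⁻ r, dY r.2.1 r.2.2 ^ p ∂(G x) ∂μX) ^ (1 / p)
      ≤ (∫⁻ x, ∫⁻ r, (dY r.2.1 r.1 + dY r.1 r.2.2) ^ p ∂(G x) ∂μX) ^ (1 / p) := by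
        gcongr with x r
        exact hdtri _ _ _
    _ ≤ _ := ENNReal.lintegral_lintegral_Lp_add_le μX G (by fun_prop) (by fun_prop) hp

lemma exists_mem_kernelCouplings_couplingCost_le [StandardBorelSpace Y] [SFinite μX]
    (hdtri : ∀ y y' y'', dY y y'' ≤ dY y y' + dY y' y'')
    (hd : Measurable fun q : Y × Y => dY q.1 q.2) (hp : 1 ≤ p) {M₁ M₂ M₃ : Kernel X Y}
    {π₁₂ π₂₃ : Kernel X (Y × Y)} (h₁₂ : π₁₂ ∈ kernelCouplings M₁ M₂)
    (h₂₃ : π₂₃ ∈ kernelCouplings M₂ M₃) :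
    ∃ π₁₃ ∈ kernelCouplings M₁ M₃, couplingCost μX dY p π₁₃ ^ (1 / p) ≤
      couplingCost μX dY p π₁₂ ^ (1 / p) + couplingCost μX dY p π₂₃ ^ (1 / p) := by
  have : IsMarkovKernel π₁₂ := h₁₂.1
  have : IsMarkovKernel π₂₃ := h₂₃.1
  -- `condKernel` needs a nonempty target; for empty `Y` all kernels into `Y` coincide.
  rcases isEmpty_or_nonempty Y with _ | _
  · exact ⟨π₁₂, ⟨h₁₂.1, h₁₂.2.1, Subsingleton.elim _ _⟩, le_self_add⟩
  set G := Kernel.glue π₁₂.swapRight π₂₃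
  have hG₁₂ : G.map (fun r => (r.2.1, r.1)) = π₁₂ := by
    rw [show (fun r : Y × Y × Y => (r.2.1, r.1)) = Prod.swap ∘ Prod.map id Prod.fst from rfl,
      Kernel.map_comp_right _ (by fun_prop) measurable_swap, Kernel.map_prodMap_fst_glue,
      Kernel.swapRight_eq, ← Kernel.map_comp_right _ measurable_swap measurable_swap,
      Prod.swap_swap_eq, Kernel.map_id]
  have hG₂₃ : G.map (fun r => (r.1, r.2.2)) = π₂₃ := by
    refine Kernel.map_prodMap_snd_glue _ _ ?_
    rw [Kernel.fst_swapRight, Kernel.snd_eq, Kernel.fst_eq, h₁₂.2.2, h₂₃.2.1]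
  rw [← hG₁₂] at h₁₂ ⊢
  rw [← hG₂₃] at h₂₃ ⊢
  exact ⟨G.map Prod.snd, map_snd_mem_kernelCouplings h₁₂ h₂₃,
    couplingCost_map_snd_rpow_le hdtri hd hp G⟩

end Wasserstein

theorem kernelWasserstein_refl_and_triangle_general
    {X Y : Type*} [MeasurableSpace X] [MeasurableSpace Y] [StandardBorelSpace Y]
    (μX : Measure X) [SigmaFinite μX]
    (dY : Y → Y → ℝ≥0∞)
    (hd0 : ∀ y, dY y y = 0)
    (hdtri : ∀ y y' y'', dY y y'' ≤ dY y y' + dY y' y'')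
    (hdmeas : Measurable (fun q : Y × Y => dY q.1 q.2))
    (p : ℝ) (hp : 1 ≤ p)
    (M₁ M₂ M₃ : Kernel X Y)
    [IsMarkovKernel M₁] :
    kernelWasserstein μX dY p M₁ M₁ = 0 ∧
    kernelWasserstein μX dY p M₁ M₃ ≤
      kernelWasserstein μX dY p M₁ M₂ + kernelWasserstein μX dY p M₂ M₃ := by
  have hp0 : 0 < p := zero_lt_one.trans_le hp
  refine ⟨le_antisymm ?_ zero_le, ENNReal.le_iInf₂_add_iInf₂ fun π₁₂ h₁₂ π₂₃ h₂₃ => ?_⟩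
  · calc kernelWasserstein μX dY p M₁ M₁
        ≤ couplingCost μX dY p (M₁.map fun y => (y, y)) ^ (1 / p) :=
          kernelWasserstein_le_couplingCost (map_diag_mem_kernelCouplings M₁)
      _ = 0 := by
          rw [couplingCost_map_diag hd0 hdmeas hp0, zero_rpow_of_pos (one_div_pos.2 hp0)]
  · obtain ⟨π₁₃, h₁₃, hcost⟩ :=
      exists_mem_kernelCouplings_couplingCost_le (μX := μX) hdtri hdmeas hp h₁₂ h₂₃
    exact (kernelWasserstein_le_couplingCost h₁₃).trans hcost

/-- The Wasserstein distance of order `p` on Markov kernels between metric measure spaces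
vanishes on the diagonal and satisfies the triangle inequality. -/
theorem kernelWasserstein_refl_and_triangle
    {X Y : Type*} [MeasurableSpace X] [MeasurableSpace Y] [StandardBorelSpace Y]
    (μX : Measure X) [SigmaFinite μX]
    (dY : Y → Y → ℝ≥0∞)
    (hd0 : ∀ y, dY y y = 0)
    (hdtri : ∀ y y' y'', dY y y'' ≤ dY y y' + dY y' y'')
    (hdmeas : Measurable (fun q : Y × Y => dY q.1 q.2))
    (p : ℝ) (hp : 1 ≤ p)
    (M₁ M₂ M₃ : Kernel X Y)
    [IsMarkovKernel M₁] [IsMarkovKernel M₂] [IsMarkovKernel M₃] :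
    kernelWasserstein μX dY p M₁ M₁ = 0 ∧
    kernelWasserstein μX dY p M₁ M₃ ≤
      kernelWasserstein μX dY p M₁ M₂ + kernelWasserstein μX dY p M₂ M₃ :=
  kernelWasserstein_refl_and_triangle_general μX dY hd0 hdtri hdmeas p hp M₁ M₂ M₃
end

section
/- A Markov kernel M : X → Y between metric measure spaces is nonexpansive under precomposition for the order-p Wasserstein metric (i.e., W_p(M·N, M·N') ≤ W_p(N,N') for all kernels N, N' : Y → Z into any metric measure space Z) if and only if M is measure-decreasing: μ_X M ≤ μ_Y. -/
open ProbabilityTheory MeasureTheory ENNReal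

/-!
If `μX · M ≤ μY`, any coupling `Π` of `N, N'` gives the coupling `Π ∘ M` of `N ∘ M, N' ∘ M`,
whose transport cost against `μX` is the cost of `Π` integrated against `μX · M`, hence at most
its cost against `μY`.

Conversely, for a measurable `B ⊆ Y` take `Z = Bool` with the discrete distance, `N` the
deterministic kernel of the indicator of `B` and `N'` the constant kernel at `false`. The
coupling `y ↦ (1_B y, false)` shows `W_p(N, N') ≤ μY(B)^{1/p}`, while any coupling of
`N ∘ M, N' ∘ M` puts mass at least `M x B` off the diagonal, so `W_p(N ∘ M, N' ∘ M) ≥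
(μX · M)(B)^{1/p}`.
-/

section

variable {X Y Z : Type*} [MeasurableSpace X] [MeasurableSpace Y] [MeasurableSpace Z]

lemma comp_mem_kernelCouplings {N N' : Kernel Y Z} {Pi : Kernel Y (Z × Z)}
    (hPi : Pi ∈ kernelCouplings N N') (M : Kernel X Y) [IsMarkovKernel M] :
    Pi ∘ₖ M ∈ kernelCouplings (N ∘ₖ M) (N' ∘ₖ M) := by
  obtain ⟨_, h_fst, h_snd⟩ := hPi
  exact ⟨inferInstance, by rw [Kernel.map_comp, h_fst], by rw [Kernel.map_comp, h_snd]⟩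

lemma deterministic_prodMk_mem_kernelCouplings {f g : Y → Z} (hf : Measurable f)
    (hg : Measurable g) :
    Kernel.deterministic (fun y => (f y, g y)) (hf.prodMk hg) ∈
      kernelCouplings (Kernel.deterministic f hf) (Kernel.deterministic g hg) := by
  refine ⟨inferInstance, ?_, ?_⟩
  · rw [← Kernel.deterministic_comp_eq_map measurable_fst,
      Kernel.deterministic_comp_deterministic]
    rfl
  · rw [← Kernel.deterministic_comp_eq_map measurable_snd,
      Kernel.deterministic_comp_deterministic]
    rfl

lemma measure_fst_preimage_le_measure_ne_add (π : Measure (Z × Z)) (S : Set Z) :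
    π (Prod.fst ⁻¹' S) ≤ π {q | q.1 ≠ q.2} + π (Prod.snd ⁻¹' S) := by
  refine (measure_mono fun q hq => ?_).trans (measure_union_le _ _)
  by_cases h : q.1 = q.2
  · exact Or.inr (show q.2 ∈ S from h ▸ hq)
  · exact Or.inl h

lemma measure_ne_le_lintegral_rpow (π : Measure (Z × Z)) {d : Z → Z → ℝ≥0∞}
    (hd : Measurable fun q : Z × Z => d q.1 q.2) (hd_one : ∀ a b, a ≠ b → 1 ≤ d a b)
    {p : ℝ} (hp : 0 < p) :
    π {q | q.1 ≠ q.2} ≤ ∫⁻ q, d q.1 q.2 ^ p ∂π :=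
  calc π {q | q.1 ≠ q.2}
      ≤ π {q | 1 ≤ d q.1 q.2 ^ p} := measure_mono fun _ hq => one_le_rpow (hd_one _ _ hq) hp
    _ = 1 * π {q | 1 ≤ d q.1 q.2 ^ p} := (one_mul _).symm
    _ ≤ ∫⁻ q, d q.1 q.2 ^ p ∂π := mul_meas_ge_le_lintegral₀ (hd.pow_const p).aemeasurable 1

lemma kernelWasserstein_deterministic_le (μ : Measure Y) {d : Z → Z → ℝ≥0∞}
    (hd : Measurable fun q : Z × Z => d q.1 q.2) (p : ℝ) {f g : Y → Z} (hf : Measurable f)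
    (hg : Measurable g) :
    kernelWasserstein μ d p (Kernel.deterministic f hf) (Kernel.deterministic g hg) ≤
      (∫⁻ y, d (f y) (g y) ^ p ∂μ) ^ (1 / p) := by
  refine (iInf₂_le _ (deterministic_prodMk_mem_kernelCouplings hf hg)).trans_eq ?_
  simp_rw [Kernel.lintegral_deterministic' _ (hd.pow_const p)]

lemma rpow_lintegral_le_kernelWasserstein (μ : Measure X) {d : Z → Z → ℝ≥0∞}
    (hd : Measurable fun q : Z × Z => d q.1 q.2) (hd_one : ∀ a b, a ≠ b → 1 ≤ d a b)
    {p : ℝ} (hp : 0 < p) {K K' : Kernel X Z} {S : Set Z} (hS : MeasurableSet S)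
    (hK' : ∀ x, K' x S = 0) :
    (∫⁻ x, K x S ∂μ) ^ (1 / p) ≤ kernelWasserstein μ d p K K' := by
  refine le_iInf₂ fun Pi ⟨_, h_fst, h_snd⟩ =>
    rpow_le_rpow (lintegral_mono fun x => ?_) (by positivity)
  calc K x S = Pi x (Prod.fst ⁻¹' S) := by rw [← h_fst, Kernel.map_apply' _ measurable_fst _ hS]
    _ ≤ Pi x {q | q.1 ≠ q.2} + Pi x (Prod.snd ⁻¹' S) :=
      measure_fst_preimage_le_measure_ne_add _ S
    _ = Pi x {q | q.1 ≠ q.2} := by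
      rw [← Kernel.map_apply' _ measurable_snd _ hS, h_snd, hK', add_zero]
    _ ≤ ∫⁻ q, d q.1 q.2 ^ p ∂(Pi x) := measure_ne_le_lintegral_rpow _ hd hd_one hp

lemma lintegral_lintegral_comp_le_of_bind_le {μX : Measure X} {μY : Measure Y}
    {M : Kernel X Y} (hle : μX.bind M ≤ μY) (K : Kernel Y Z) {g : Z → ℝ≥0∞}
    (hg : Measurable g) :
    ∫⁻ x, ∫⁻ z, g z ∂((K ∘ₖ M) x) ∂μX ≤ ∫⁻ y, ∫⁻ z, g z ∂(K y) ∂μY :=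
  calc ∫⁻ x, ∫⁻ z, g z ∂((K ∘ₖ M) x) ∂μX
      = ∫⁻ x, ∫⁻ y, ∫⁻ z, g z ∂(K y) ∂(M x) ∂μX := by
        simp_rw [Kernel.lintegral_comp _ _ _ hg]
    _ = ∫⁻ y, ∫⁻ z, g z ∂(K y) ∂(μX.bind M) :=
        (Measure.lintegral_bind M.aemeasurable (hg.lintegral_kernel).aemeasurable).symm
    _ ≤ ∫⁻ y, ∫⁻ z, g z ∂(K y) ∂μY := lintegral_mono' hle le_rfl

theorem kernelWasserstein_comp_le_of_bind_le {μX : Measure X} {μY : Measure Y}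
    {d : Z → Z → ℝ≥0∞} (hd : Measurable fun q : Z × Z => d q.1 q.2) {p : ℝ} (hp : 0 ≤ p)
    {M : Kernel X Y} [IsMarkovKernel M] (hle : μX.bind M ≤ μY) (N N' : Kernel Y Z) :
    kernelWasserstein μX d p (N ∘ₖ M) (N' ∘ₖ M) ≤ kernelWasserstein μY d p N N' :=
  le_iInf₂ fun Pi hPi => (iInf₂_le _ (comp_mem_kernelCouplings hPi M)).trans <|
    rpow_le_rpow (lintegral_lintegral_comp_le_of_bind_le hle Pi (hd.pow_const p))
      (by positivity)

theorem bind_le_of_kernelWasserstein_comp_le {μX : Measure X} {μY : Measure Y} {p : ℝ}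
    (hp : 0 < p) {M : Kernel X Y}
    (h : ∀ N N' : Kernel Y Bool, IsMarkovKernel N → IsMarkovKernel N' →
      kernelWasserstein μX (fun a b => if a = b then 0 else 1) p (N ∘ₖ M) (N' ∘ₖ M) ≤
        kernelWasserstein μY (fun a b => if a = b then 0 else 1) p N N') :
    μX.bind M ≤ μY := by
  classical
  refine Measure.le_iff.2 fun B hB => ?_
  set d : Bool → Bool → ℝ≥0∞ := fun a b => if a = b then 0 else 1
  have hd : Measurable fun q : Bool × Bool => d q.1 q.2 := .of_discrete
  have hd_one : ∀ a b, a ≠ b → 1 ≤ d a b := fun a b hab => by simp [d, hab]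
  have hf : Measurable fun y => decide (y ∈ B) :=
    measurable_to_bool (by convert hB; ext y; simp)
  set N := Kernel.deterministic _ hf
  set N' := Kernel.deterministic (fun _ : Y => false) measurable_const
  have hN : ∀ x, (N ∘ₖ M) x {true} = M x B := fun x => by
    rw [Kernel.deterministic_comp_eq_map, Kernel.map_apply' _ hf _ (measurableSet_singleton _)]
    congr 1
    ext y
    simp
  have hN' : ∀ x, (N' ∘ₖ M) x {true} = 0 := fun x => by
    rw [Kernel.deterministic_comp_eq_map,
      Kernel.map_apply' _ measurable_const _ (measurableSet_singleton _)]
    simp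
  have h_lower : μX.bind M B ^ (1 / p) ≤ kernelWasserstein μX d p (N ∘ₖ M) (N' ∘ₖ M) :=
    calc μX.bind M B ^ (1 / p)
        ≤ (∫⁻ x, (N ∘ₖ M) x {true} ∂μX) ^ (1 / p) := by
          simp_rw [hN]
          exact rpow_le_rpow (Measure.bind_apply_le M hB) (by positivity)
      _ ≤ kernelWasserstein μX d p (N ∘ₖ M) (N' ∘ₖ M) :=
          rpow_lintegral_le_kernelWasserstein μX hd hd_one hp (measurableSet_singleton _) hN'
  have h_upper : kernelWasserstein μY d p N N' ≤ μY B ^ (1 / p) := by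
    refine (kernelWasserstein_deterministic_le μY hd p hf measurable_const).trans_eq ?_
    rw [← lintegral_indicator_one hB]
    congr 1
    refine lintegral_congr fun y => ?_
    by_cases hy : y ∈ B <;> simp [d, hy, zero_rpow_of_pos hp]
  exact (rpow_le_rpow_iff (by positivity)).1
    (h_lower.trans ((h N N' inferInstance inferInstance).trans h_upper))

end

theorem kernelWasserstein_precomp_nonexpansive_iff_measure_decreasing_general
    {X Y : Type} [MeasurableSpace X] [MeasurableSpace Y]
    (μX : Measure X) (μY : Measure Y)
    (p : ℝ) (hp : 1 ≤ p)
    (M : Kernel X Y) [IsMarkovKernel M] :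
    (∀ (Z : Type) [MeasurableSpace Z] (dZ : Z → Z → ℝ≥0∞),
        Measurable (fun q : Z × Z => dZ q.1 q.2) →
        ∀ (N N' : Kernel Y Z), IsMarkovKernel N → IsMarkovKernel N' →
          kernelWasserstein μX dZ p (N ∘ₖ M) (N' ∘ₖ M) ≤
            kernelWasserstein μY dZ p N N') ↔
      μX.bind M ≤ μY := by
  have hp_pos : 0 < p := zero_lt_one.trans_le hp
  refine ⟨fun h => ?_, fun hle Z _ dZ hd N N' _ _ =>
    kernelWasserstein_comp_le_of_bind_le hd hp_pos.le hle N N'⟩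
  exact bind_le_of_kernelWasserstein_comp_le hp_pos fun N N' =>
    h Bool (fun a b => if a = b then 0 else 1) .of_discrete N N'

/-- A Markov kernel `M : X → Y` is nonexpansive under precomposition for the order-`p`
Wasserstein metric (for all targets `Z` and all Markov kernels `N, N' : Y → Z`) if and only
if it is measure-decreasing: `μX · M ≤ μY`. -/
theorem kernelWasserstein_precomp_nonexpansive_iff_measure_decreasing
    {X Y : Type} [MeasurableSpace X] [MeasurableSpace Y]
    (μX : Measure X) (μY : Measure Y) [SigmaFinite μX] [SigmaFinite μY]
    (p : ℝ) (hp : 1 ≤ p)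
    (M : Kernel X Y) [IsMarkovKernel M] :
    (∀ (Z : Type) [MeasurableSpace Z] (dZ : Z → Z → ℝ≥0∞),
        Measurable (fun q : Z × Z => dZ q.1 q.2) →
        ∀ (N N' : Kernel Y Z), IsMarkovKernel N → IsMarkovKernel N' →
          kernelWasserstein μX dZ p (N ∘ₖ M) (N' ∘ₖ M) ≤
            kernelWasserstein μY dZ p N N') ↔
      μX.bind M ≤ μY :=
  kernelWasserstein_precomp_nonexpansive_iff_measure_decreasing_general μX μY p hp M
end
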